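/- Let x, y, q be complex numbers with |q| < 1. Then Σ_{i,j≥0} x^i · y^(i+2j) · q^(2i²+4j²+4ij−i) / ((q²;q²)_i · (q⁴;q⁴)_j) = Σ_{i,j≥0} (−1)^j · (x;q²)_j · y^(i+j) · q^(i²+j²+2ij) / ((q²;q²)_i · (q²;q²)_j). -/

import Mathlib

/-!
Put `Q = q²`. Both sides are `∑ₙ yⁿ q^{n²} cₙ`, where `cₙ` is the `n`-th coefficient of a product
of two formal power series in `t`: on the left of
`(∑ Q^{C(i,2)} xⁱ tⁱ / (Q;Q)ᵢ) · (∑ t^{2j} / (Q²;Q²)ⱼ)`, on the right of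
`(∑ tⁱ / (Q;Q)ᵢ) · (∑ (x;Q)ⱼ (-t)ʲ / (Q;Q)ⱼ)`. As functions these are `(-xt;Q)_∞ / (t²;Q²)_∞` and
`(-xt;Q)_∞ / ((t;Q)_∞ (-t;Q)_∞)`. Formally, both products `A` solve the `q`-difference equation
`(1 + xt) A(Qt) = (1 - t²) A(t)` with `A(0) = 1`, and such a solution is unique because comparing
coefficients of `tⁿ` determines `(Qⁿ - 1) aₙ` from `a₀, …, aₙ₋₁`. The regrouping by `n` uses
`2i² + 4j² + 4ij - i = (i + 2j)² + 2·C(i,2)` and absolute convergence: the weight `q^{n²}` beats the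
geometric growth of the coefficients.
-/

/-- Finite q-Pochhammer symbol `(a; q)_n = ∏_{k=0}^{n-1} (1 - a q^k)`. -/
noncomputable def qPoch (a q : ℂ) (n : ℕ) : ℂ := ∏ k ∈ Finset.range n, (1 - a * q ^ k)

open Finset PowerSeries

@[simp] lemma qPoch_zero (a Q : ℂ) : qPoch a Q 0 = 1 := prod_range_zero _

lemma qPoch_succ (a Q : ℂ) (n : ℕ) : qPoch a Q (n + 1) = qPoch a Q n * (1 - a * Q ^ n) :=
  prod_range_succ _ _

lemma qPoch_self_ne_zero {Q : ℂ} (hQ : ∀ n, Q ^ (n + 1) ≠ 1) (n : ℕ) : qPoch Q Q n ≠ 0 :=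
  prod_ne_zero_iff.2 fun k _ => by rw [← pow_succ', sub_ne_zero]; exact (hQ k).symm

lemma qPoch_self_succ (Q : ℂ) (n : ℕ) : qPoch Q Q (n + 1) = qPoch Q Q n * (1 - Q ^ (n + 1)) := by
  rw [qPoch_succ, ← pow_succ']

namespace PowerSeries

theorem eq_of_mul_rescale_eq_mul {R : Type*} [CommRing R] [IsDomain R] {Q : R}
    (hQ : ∀ n, Q ^ (n + 1) ≠ 1) {L M A B : R⟦X⟧} (hL : constantCoeff L = 1)
    (hM : constantCoeff M = 1) (hA : L * rescale Q A = M * A) (hB : L * rescale Q B = M * B)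
    (h0 : constantCoeff A = constantCoeff B) : A = B := by
  set D := A - B
  have hD : L * rescale Q D = M * D := by simp only [D, map_sub, mul_sub, hA, hB]
  suffices ∀ n, coeff n D = 0 from sub_eq_zero.1 (ext fun n => (this n).trans (map_zero _).symm)
  intro n
  induction n using Nat.strong_induction_on with
  | _ n ih =>
  have lead : ∀ {φ ψ : R⟦X⟧}, (∀ m < n, coeff m ψ = 0) →
      coeff n (φ * ψ) = constantCoeff φ * coeff n ψ := by
    intro φ ψ hψ
    rw [coeff_mul, sum_eq_single (0, n)]
    · simp
    · intro p hp hne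
      rw [HasAntidiagonal.mem_antidiagonal] at hp
      rw [hψ p.2 (by grind), mul_zero]
    · simp
  have key := congrArg (coeff n) hD
  rw [lead (fun m hm => by rw [coeff_rescale, ih m hm, mul_zero]), lead ih, hL, hM,
    coeff_rescale, one_mul, one_mul] at key
  rcases n with _ | n
  · simpa [D, sub_eq_zero] using h0
  · have : (Q ^ (n + 1) - 1) * coeff (n + 1) D = 0 := by rw [sub_mul, key, one_mul, sub_self]
    exact (mul_eq_zero.1 this).resolve_left (sub_ne_zero.2 (hQ n))

end PowerSeries

namespace QSeries

variable (Q x : ℂ)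

noncomputable def qExp : ℂ⟦X⟧ := mk fun n => (qPoch Q Q n)⁻¹

noncomputable def qEuler : ℂ⟦X⟧ := mk fun n => x ^ n * Q ^ n.choose 2 / qPoch Q Q n

noncomputable def qBinomial : ℂ⟦X⟧ := mk fun n => (-1) ^ n * qPoch x Q n / qPoch Q Q n

noncomputable def gauss : ℂ⟦X⟧ :=
  mk fun n => if Even n then (qPoch (Q ^ 2) (Q ^ 2) (n / 2))⁻¹ else 0

variable {Q} (hQ : ∀ n, Q ^ (n + 1) ≠ 1)
include hQ

lemma rescale_qExp : rescale Q (qExp Q) = (1 - X) * qExp Q := by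
  ext (_ | n)
  · simp [qExp]
  · have := sub_ne_zero.2 (hQ n).symm
    have := qPoch_self_ne_zero hQ n
    simp only [qExp, coeff_rescale, coeff_mk, sub_mul, one_mul, map_sub, coeff_succ_X_mul,
      qPoch_self_succ]
    field_simp
    ring

lemma mul_rescale_qEuler : (1 + C x * X) * rescale Q (qEuler Q x) = qEuler Q x := by
  ext (_ | n)
  · simp [qEuler, rescale_mk]
  · have := sub_ne_zero.2 (hQ n).symm
    have := qPoch_self_ne_zero hQ n
    simp only [qEuler, coeff_rescale, coeff_mk, add_mul, one_mul, map_add, mul_assoc,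
      coeff_C_mul, coeff_succ_X_mul, qPoch_self_succ, Nat.choose_succ_succ', Nat.choose_one_right]
    field_simp
    ring

lemma mul_rescale_qBinomial :
    (1 + C x * X) * rescale Q (qBinomial Q x) = (1 + X) * qBinomial Q x := by
  ext (_ | n)
  · simp [qBinomial, rescale_mk]
  · have := sub_ne_zero.2 (hQ n).symm
    have := qPoch_self_ne_zero hQ n
    simp only [qBinomial, coeff_rescale, coeff_mk, add_mul, one_mul, map_add, mul_assoc,
      coeff_C_mul, coeff_succ_X_mul, qPoch_self_succ, qPoch_succ]
    field_simp
    ring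

lemma coeff_gauss_add_two (n : ℕ) :
    (1 - Q ^ (n + 2)) * coeff (n + 2) (gauss Q) = coeff n (gauss Q) := by
  have hQ2 : ∀ n, (Q ^ 2) ^ (n + 1) ≠ 1 := fun n => by rw [← pow_mul]; exact hQ (2 * n + 1)
  simp only [gauss, coeff_mk]
  rcases Nat.even_or_odd' n with ⟨t, rfl | rfl⟩
  · have := qPoch_self_ne_zero hQ2 t
    have := sub_ne_zero.2 (hQ2 t).symm
    rw [if_pos (by exact ⟨t + 1, by ring⟩), if_pos (even_two_mul t),
      show (2 * t + 2) / 2 = t + 1 by omega, Nat.mul_div_cancel_left t two_pos, qPoch_self_succ]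
    field_simp
    ring
  · rw [if_neg (by rw [Nat.not_even_iff_odd]; exact ⟨t + 1, by ring⟩),
      if_neg (Nat.not_even_iff_odd.2 (odd_two_mul_add_one t)), mul_zero]

lemma rescale_gauss : rescale Q (gauss Q) = (1 - X ^ 2) * gauss Q := by
  ext (_ | _ | n)
  · simp [gauss]
  · simp [gauss, sub_mul, coeff_X_pow_mul']
  · rw [coeff_rescale, sub_mul, one_mul, map_sub, coeff_X_pow_mul', if_pos (by omega),
      show n + 1 + 1 - 2 = n by omega]
    linear_combination -coeff_gauss_add_two hQ n

theorem qEuler_mul_gauss : qEuler Q x * gauss Q = qExp Q * qBinomial Q x := by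
  refine eq_of_mul_rescale_eq_mul hQ (L := 1 + C x * X) (M := 1 - X ^ 2) (by simp) (by simp)
    ?_ ?_ (by simp [qEuler, gauss, qExp, qBinomial])
  · rw [map_mul, ← mul_assoc, mul_rescale_qEuler x hQ, rescale_gauss hQ]; ring
  · rw [map_mul, rescale_qExp hQ, mul_left_comm, mul_rescale_qBinomial x hQ]; ring

end QSeries

lemma Summable.tsum_eq_tsum_sum_antidiagonal {α : Type*} [AddCommGroup α] [UniformSpace α]
    [IsUniformAddGroup α] [CompleteSpace α] [T0Space α] {f : ℕ × ℕ → α} (hf : Summable f) :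
    ∑' p, f p = ∑' n, ∑ p ∈ antidiagonal n, f p := by
  let e := HasAntidiagonal.sigmaAntidiagonalEquivProd (A := ℕ)
  have he : Summable fun c => f (e c) := e.summable_iff.2 hf
  rw [← e.tsum_eq f, he.tsum_sigma]
  refine tsum_congr fun n => ?_
  rw [tsum_fintype]
  exact sum_coe_sort _ f

lemma summable_pow_mul_pow_sq {a r : ℝ} (hr0 : 0 ≤ r) (hr : r < 1) :
    Summable fun n : ℕ => a ^ n * r ^ (n ^ 2) := by
  have hlim : Filter.Tendsto (fun n : ℕ => a * r ^ n) Filter.atTop (nhds 0) := by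
    simpa using (tendsto_pow_atTop_nhds_zero_of_lt_one hr0 hr).const_mul a
  refine Summable.of_norm_bounded_eventually_nat summable_geometric_two ?_
  filter_upwards [hlim.norm.eventually (gt_mem_nhds (by norm_num : ‖(0:ℝ)‖ < 1 / 2))] with n hn
  rw [sq, pow_mul, ← mul_pow, norm_pow]
  exact pow_le_pow_left₀ (norm_nonneg _) hn.le n

lemma norm_qPoch_le {a Q : ℂ} (hQ : ‖Q‖ ≤ 1) (n : ℕ) : ‖qPoch a Q n‖ ≤ (1 + ‖a‖) ^ n := by
  rw [qPoch, norm_prod]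
  calc ∏ k ∈ range n, ‖1 - a * Q ^ k‖ ≤ ∏ _k ∈ range n, (1 + ‖a‖) := by
        refine prod_le_prod (fun _ _ => norm_nonneg _) fun k _ => (norm_sub_le _ _).trans ?_
        rw [norm_one, norm_mul, norm_pow]
        gcongr
        exact mul_le_of_le_one_right (norm_nonneg a) (pow_le_one₀ (norm_nonneg Q) hQ)
    _ = (1 + ‖a‖) ^ n := by rw [prod_const, card_range]

lemma exists_forall_norm_inv_qPoch_le {a Q : ℂ} (ha : ‖a‖ < 1) (hQ : ‖Q‖ < 1) :
    ∃ C, ∀ n, ‖(qPoch a Q n)⁻¹‖ ≤ C := by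
  set u : ℕ → ℝ := fun k => ‖a‖ * ‖Q‖ ^ k
  have hu1 : ∀ k, u k < 1 := fun k =>
    (mul_le_of_le_one_right (norm_nonneg a) (pow_le_one₀ (norm_nonneg Q) hQ.le)).trans_lt ha
  have hu : Summable u := (summable_geometric_of_lt_one (norm_nonneg Q) hQ).mul_left _
  -- `P = (‖a‖; ‖Q‖)_∞`: the partial products decrease to it, and it is nonzero.
  set P := ∏' k, (1 + -u k)
  have htend : Filter.Tendsto (fun n => ∏ k ∈ range n, (1 + -u k)) Filter.atTop (nhds P) :=
    (Real.multipliable_one_add_of_summable hu.neg).tendsto_prod_tprod_nat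
  have hanti : Antitone fun n => ∏ k ∈ range n, (1 + -u k) := antitone_nat_of_succ_le fun n => by
    rw [prod_range_succ]
    exact mul_le_of_le_one_right (prod_nonneg fun k _ => by linarith [hu1 k])
      (by linarith [show 0 ≤ u n by positivity])
  have hP : 0 < P := by
    refine lt_of_le_of_ne (ge_of_tendsto' htend fun n => prod_nonneg fun k _ => ?_) ?_
    · linarith [hu1 k]
    · refine (tprod_one_add_ne_zero_of_summable (fun k => ?_) hu.neg.norm).symm
      linarith [hu1 k]
  refine ⟨P⁻¹, fun n => ?_⟩
  rw [norm_inv]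
  refine inv_anti₀ hP ((hanti.le_of_tendsto htend n).trans ?_)
  rw [qPoch, norm_prod]
  refine prod_le_prod (fun k _ => by linarith [hu1 k]) fun k _ => ?_
  calc 1 + -u k = ‖(1 : ℂ)‖ - ‖a * Q ^ k‖ := by simp [u, sub_eq_add_neg]
    _ ≤ ‖1 - a * Q ^ k‖ := norm_sub_norm_le _ _

def HasGeomBoundedCoeff (A : ℂ⟦X⟧) : Prop := ∃ C M : ℝ, 0 ≤ M ∧ ∀ n, ‖coeff n A‖ ≤ C * M ^ n

lemma summable_weighted_coeff_mul {q y : ℂ} (hq : ‖q‖ < 1) {A B : ℂ⟦X⟧}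
    (hA : HasGeomBoundedCoeff A) (hB : HasGeomBoundedCoeff B) :
    Summable fun p : ℕ × ℕ =>
      y ^ (p.1 + p.2) * q ^ ((p.1 + p.2) ^ 2) * (coeff p.1 A * coeff p.2 B) := by
  obtain ⟨C₁, M₁, hM₁, hA⟩ := hA
  obtain ⟨C₂, M₂, hM₂, hB⟩ := hB
  set M := max M₁ M₂
  have hC₁ : 0 ≤ C₁ := by simpa using (norm_nonneg _).trans (hA 0)
  have hC₂ : 0 ≤ C₂ := by simpa using (norm_nonneg _).trans (hB 0)
  set g : ℝ → ℕ → ℝ := fun C i => C * ((‖y‖ * M) ^ i * ‖q‖ ^ (i ^ 2))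
  have hg : ∀ C, Summable (g C) := fun C =>
    (summable_pow_mul_pow_sq (norm_nonneg q) hq).mul_left C
  refine Summable.of_norm_bounded ((hg C₁).mul_of_nonneg (hg C₂) (fun i => by positivity)
    fun k => by positivity) fun ⟨i, k⟩ => ?_
  have hsq : ‖q‖ ^ ((i + k) ^ 2) ≤ ‖q‖ ^ (i ^ 2) * ‖q‖ ^ (k ^ 2) := by
    rw [← pow_add]
    exact pow_le_pow_of_le_one (norm_nonneg q) hq.le (by rw [add_sq]; omega)
  have hAi : ‖coeff i A‖ ≤ C₁ * M ^ i :=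
    (hA i).trans (by gcongr; exact le_max_left _ _)
  have hBk : ‖coeff k B‖ ≤ C₂ * M ^ k :=
    (hB k).trans (by gcongr; exact le_max_right _ _)
  simp only [norm_mul, norm_pow, g]
  calc ‖y‖ ^ (i + k) * ‖q‖ ^ ((i + k) ^ 2) * (‖coeff i A‖ * ‖coeff k B‖)
      ≤ ‖y‖ ^ (i + k) * (‖q‖ ^ (i ^ 2) * ‖q‖ ^ (k ^ 2)) * (C₁ * M ^ i * (C₂ * M ^ k)) := by
        gcongr
    _ = _ := by ring

lemma tsum_weighted_coeff_mul {q y : ℂ} (hq : ‖q‖ < 1) {A B : ℂ⟦X⟧}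
    (hA : HasGeomBoundedCoeff A) (hB : HasGeomBoundedCoeff B) :
    ∑' p : ℕ × ℕ, y ^ (p.1 + p.2) * q ^ ((p.1 + p.2) ^ 2) * (coeff p.1 A * coeff p.2 B) =
      ∑' n, y ^ n * q ^ (n ^ 2) * coeff n (A * B) := by
  rw [(summable_weighted_coeff_mul hq hA hB).tsum_eq_tsum_sum_antidiagonal]
  refine tsum_congr fun n => ?_
  rw [coeff_mul, mul_sum]
  exact sum_congr rfl fun p hp => by rw [HasAntidiagonal.mem_antidiagonal.1 hp]

lemma tsum_comp_two_mul_snd {α : Type*} [AddCommMonoid α] [TopologicalSpace α] {f : ℕ × ℕ → α}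
    (hf : ∀ i k, Odd k → f (i, k) = 0) : ∑' p : ℕ × ℕ, f (p.1, 2 * p.2) = ∑' p, f p := by
  refine Function.Injective.tsum_eq (g := fun p : ℕ × ℕ => (p.1, 2 * p.2)) ?_ ?_
  · rintro ⟨i, j⟩ ⟨i', j'⟩ h
    simp only [Prod.mk.injEq] at h
    simp only [Prod.mk.injEq]
    omega
  · rintro ⟨i, k⟩ hik
    obtain ⟨j, rfl⟩ : Even k := Nat.not_odd_iff_even.1 fun hk => hik (hf i k hk)
    exact ⟨(i, j), by simp [two_mul]⟩

lemma two_mul_choose_two_add (i : ℕ) : 2 * i.choose 2 + i = i ^ 2 := by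
  induction i with
  | zero => rfl
  | succ i ih => rw [Nat.choose_succ_succ', Nat.choose_one_right]; nlinarith

namespace QSeries

variable (x : ℂ)

lemma tsum_weighted_coeff_qEuler_mul_coeff_gauss (y q : ℂ) :
    ∑' p : ℕ × ℕ, y ^ (p.1 + p.2) * q ^ ((p.1 + p.2) ^ 2) *
        (coeff p.1 (qEuler (q ^ 2) x) * coeff p.2 (gauss (q ^ 2))) =
      ∑' p : ℕ × ℕ, x ^ p.1 * y ^ (p.1 + 2 * p.2) *
        q ^ (2 * p.1 ^ 2 + 4 * p.2 ^ 2 + 4 * p.1 * p.2 - p.1) /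
        (qPoch (q ^ 2) (q ^ 2) p.1 * qPoch (q ^ 4) (q ^ 4) p.2) := by
  refine (tsum_comp_two_mul_snd fun i k hk => ?_).symm.trans (tsum_congr fun ⟨i, j⟩ => ?_)
  · simp [gauss, Nat.not_even_iff_odd.2 hk]
  · have hexp : 2 * i ^ 2 + 4 * j ^ 2 + 4 * i * j - i = (i + 2 * j) ^ 2 + 2 * i.choose 2 := by
      have := two_mul_choose_two_add i
      have : (i + 2 * j) ^ 2 = i ^ 2 + 4 * i * j + 4 * j ^ 2 := by ring
      omega
    simp only [qEuler, gauss, coeff_mk, if_pos (even_two_mul j),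
      Nat.mul_div_cancel_left j two_pos, ← pow_mul q 2 2]
    rw [hexp, pow_add q, pow_mul q 2]
    ring

section

variable {Q : ℂ} (hQ : ‖Q‖ < 1)
include hQ

lemma hasGeomBoundedCoeff_qExp : HasGeomBoundedCoeff (qExp Q) := by
  obtain ⟨C, hC⟩ := exists_forall_norm_inv_qPoch_le hQ hQ
  exact ⟨C, 1, zero_le_one, fun n => by simpa [qExp] using hC n⟩

lemma hasGeomBoundedCoeff_qEuler : HasGeomBoundedCoeff (qEuler Q x) := by
  obtain ⟨C, hC⟩ := exists_forall_norm_inv_qPoch_le hQ hQ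
  refine ⟨C, ‖x‖, norm_nonneg x, fun n => ?_⟩
  rw [qEuler, coeff_mk, div_eq_mul_inv, norm_mul, norm_mul, norm_pow, norm_pow]
  calc ‖x‖ ^ n * ‖Q‖ ^ n.choose 2 * ‖(qPoch Q Q n)⁻¹‖ ≤ ‖x‖ ^ n * 1 * C := by
        gcongr
        · exact pow_le_one₀ (norm_nonneg Q) hQ.le
        · exact hC n
    _ = C * ‖x‖ ^ n := by ring

lemma hasGeomBoundedCoeff_qBinomial : HasGeomBoundedCoeff (qBinomial Q x) := by
  obtain ⟨C, hC⟩ := exists_forall_norm_inv_qPoch_le hQ hQ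
  refine ⟨C, 1 + ‖x‖, by positivity, fun n => ?_⟩
  rw [qBinomial, coeff_mk, div_eq_mul_inv, norm_mul, norm_mul, norm_pow, norm_neg, norm_one,
    one_pow, one_mul, mul_comm]
  exact mul_le_mul (hC n) (norm_qPoch_le hQ.le n) (norm_nonneg _)
    ((norm_nonneg _).trans (hC 0))

lemma hasGeomBoundedCoeff_gauss : HasGeomBoundedCoeff (gauss Q) := by
  have hQ2 : ‖Q ^ 2‖ < 1 := by rw [norm_pow]; exact pow_lt_one₀ (norm_nonneg Q) hQ two_ne_zero
  obtain ⟨C, hC⟩ := exists_forall_norm_inv_qPoch_le hQ2 hQ2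
  refine ⟨C, 1, zero_le_one, fun n => ?_⟩
  rw [gauss, coeff_mk, one_pow, mul_one]
  split_ifs
  · exact hC _
  · simpa using (norm_nonneg _).trans (hC 0)

end

end QSeries

open QSeries in
theorem stmt_10 (x y q : ℂ) (hq : ‖q‖ < 1) :
    (∑' p : ℕ × ℕ,
        x ^ p.1 * y ^ (p.1 + 2 * p.2) *
          q ^ (2 * p.1 ^ 2 + 4 * p.2 ^ 2 + 4 * p.1 * p.2 - p.1) /
          (qPoch (q ^ 2) (q ^ 2) p.1 * qPoch (q ^ 4) (q ^ 4) p.2))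
      = ∑' p : ℕ × ℕ,
          (-1 : ℂ) ^ p.2 * qPoch x (q ^ 2) p.2 * y ^ (p.1 + p.2) *
            q ^ (p.1 ^ 2 + p.2 ^ 2 + 2 * p.1 * p.2) /
            (qPoch (q ^ 2) (q ^ 2) p.1 * qPoch (q ^ 2) (q ^ 2) p.2) := by
  have hQ : ‖q ^ 2‖ < 1 := by rw [norm_pow]; exact pow_lt_one₀ (norm_nonneg q) hq two_ne_zero
  have hQ' : ∀ n, (q ^ 2) ^ (n + 1) ≠ 1 := fun n h =>
    (pow_lt_one₀ (norm_nonneg _) hQ n.succ_ne_zero).ne (by rw [← norm_pow, h, norm_one])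
  calc _ = ∑' p : ℕ × ℕ, y ^ (p.1 + p.2) * q ^ ((p.1 + p.2) ^ 2) *
          (coeff p.1 (qEuler (q ^ 2) x) * coeff p.2 (gauss (q ^ 2))) :=
        (tsum_weighted_coeff_qEuler_mul_coeff_gauss x y q).symm
    _ = ∑' n, y ^ n * q ^ (n ^ 2) * coeff n (qEuler (q ^ 2) x * gauss (q ^ 2)) :=
        tsum_weighted_coeff_mul hq (hasGeomBoundedCoeff_qEuler x hQ) (hasGeomBoundedCoeff_gauss hQ)
    _ = ∑' n, y ^ n * q ^ (n ^ 2) * coeff n (qExp (q ^ 2) * qBinomial (q ^ 2) x) := by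
        rw [qEuler_mul_gauss x hQ']
    _ = ∑' p : ℕ × ℕ, y ^ (p.1 + p.2) * q ^ ((p.1 + p.2) ^ 2) *
          (coeff p.1 (qExp (q ^ 2)) * coeff p.2 (qBinomial (q ^ 2) x)) :=
        (tsum_weighted_coeff_mul hq (hasGeomBoundedCoeff_qExp hQ)
          (hasGeomBoundedCoeff_qBinomial x hQ)).symm
    _ = _ := tsum_congr fun ⟨i, j⟩ => by
        simp only [qExp, qBinomial, coeff_mk, show (i + j) ^ 2 = i ^ 2 + j ^ 2 + 2 * i * j by ring]
        ring
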